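/- (Acyclic Digicomp counters.) For every integer k ≥ 1 there exists an acyclic switch graph with at most ⌊log₂ k⌋ + 3 vertices, containing an entry vertex c and two distinct absorbing vertices F and D, such that when balls are released sequentially from c in the Digicomp process, each of the first k − 1 balls stops at F and the k-th ball stops at D. -/

import Mathlib

/-!
The graph is a binary counter. Its vertices are `m = ⌊log₂ k⌋ + 1` bit vertices `0, …, m - 1`
and the two exits `D = m`, `F = m + 1`; every edge goes from a bit to a higher vertex, so the
graph is acyclic. Reading the switch at bit `j` relative to bit `j` of an offset `B`, the
switches store a number `N`. A ball entering at bit `0` passes over the trailing ones of `N`,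
clearing them, until it meets the lowest zero bit, sets it and drops to `F`; if bits `0, …, m - 1`
are all ones it runs through to `D`. Either way it leaves `N + 1` behind. Starting from
`B = 2 ^ m - k`, the `i`-th ball sees `N = 2 ^ m - k + i`, which is `2 ^ m - 1` exactly when
`i = k - 1`.
-/

open scoped Classical

variable {V : Type*}

/-- One step of the train: move along the edge given by the current switch state
and toggle the switch at the current vertex. -/
def step [DecidableEq V] (s0 s1 : V → V) (c : V × (V → Bool)) : V × (V → Bool) :=
  (if c.2 c.1 then s1 c.1 else s0 c.1, Function.update c.2 c.1 (!c.2 c.1))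

/-- A vertex is absorbing if both of its out-edges are self-loops. -/
def Absorbing (s0 s1 : V → V) (v : V) : Prop := s0 v = v ∧ s1 v = v

/-- The step map of a ball: it stops (configuration frozen, no toggle) at an absorbing
vertex, and otherwise moves by the step map. -/
def stepD [DecidableEq V] (s0 s1 : V → V) (c : V × (V → Bool)) : V × (V → Bool) :=
  if s0 c.1 = c.1 ∧ s1 c.1 = c.1 then c else step s0 s1 c

/-- The switch assignment left behind by one ball released at `st` with initial
assignment `σ`: the assignment when the ball first reaches an absorbing vertex
(junk value `σ` if it never does). -/
noncomputable def ballFinal [DecidableEq V] (s0 s1 : V → V) (st : V) (σ : V → Bool) :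
    V → Bool :=
  if h : ∃ k, Absorbing s0 s1 ((stepD s0 s1)^[k] (st, σ)).1 then
    ((stepD s0 s1)^[Nat.find h] (st, σ)).2
  else σ

/-- The switch assignment after `i` balls have been released sequentially from `st`
(the first ball sees all switches `0`). -/
noncomputable def sigmaAfter [DecidableEq V] (s0 s1 : V → V) (st : V) :
    ℕ → (V → Bool)
  | 0 => fun _ => false
  | i + 1 => ballFinal s0 s1 st (sigmaAfter s0 s1 st i)

/-- The configuration of the `i`-th ball (0-indexed) after `k` of its own steps. -/
noncomputable def ballConfig [DecidableEq V] (s0 s1 : V → V) (st : V) (i k : ℕ) :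
    V × (V → Bool) :=
  (stepD s0 s1)^[k] (st, sigmaAfter s0 s1 st i)


/-- A switch graph is acyclic if every directed cycle (a closed edge-sequence of
positive length) is trivial, i.e. all its vertices are equal (only self-loops). -/
def IsAcyclicSG (s0 s1 : V → V) : Prop :=
  ∀ (k : ℕ) (v : ℕ → V), 1 ≤ k → v k = v 0 →
    (∀ j < k, v (j + 1) = s0 (v j) ∨ v (j + 1) = s1 (v j)) →
    ∀ j ≤ k, v j = v 0

open Function

theorem Nat.testBit_add_one_of_lowest_zero {N T : ℕ} (hlow : ∀ j < T, N.testBit j = true)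
    (hT : N.testBit T = false) (j : ℕ) :
    (N + 1).testBit j = if j ≤ T then !N.testBit j else N.testBit j := by
  induction T generalizing N j with
  | zero =>
    have hN : N % 2 = 0 := by simpa using hT
    cases j with
    | zero => simp [Nat.testBit_zero, hN, Nat.add_mod]
    | succ j =>
      rw [Nat.testBit_add_one, Nat.testBit_add_one, if_neg (by omega)]
      congr 1
      omega
  | succ T ih =>
    have hN : N % 2 = 1 := by simpa using hlow 0 (by omega)
    cases j with
    | zero => simp [Nat.testBit_zero, hN, Nat.add_mod]
    | succ j =>
      have hdiv : (N + 1) / 2 = N / 2 + 1 := by omega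
      rw [Nat.testBit_add_one, Nat.testBit_add_one, hdiv,
        ih (fun i hi => by simpa [Nat.testBit_div_two] using hlow (i + 1) (by omega))
          (by simpa [Nat.testBit_div_two] using hT)]
      simp only [Nat.add_le_add_iff_right]

section SwitchGraph

variable [DecidableEq V] {s0 s1 : V → V}

theorem stepD_of_absorbing {c : V × (V → Bool)} (h : Absorbing s0 s1 c.1) :
    stepD s0 s1 c = c :=
  if_pos h

theorem stepD_of_not_absorbing {c : V × (V → Bool)} (h : ¬Absorbing s0 s1 c.1) :
    stepD s0 s1 c = step s0 s1 c :=
  if_neg h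

theorem ballFinal_eq_of_absorbing {st : V} {σ : V → Bool} {K : ℕ}
    (hK : Absorbing s0 s1 ((stepD s0 s1)^[K] (st, σ)).1) :
    ballFinal s0 s1 st σ = ((stepD s0 s1)^[K] (st, σ)).2 := by
  have hex : ∃ k, Absorbing s0 s1 ((stepD s0 s1)^[k] (st, σ)).1 := ⟨K, hK⟩
  obtain ⟨d, rfl⟩ := Nat.exists_eq_add_of_le (Nat.find_min' hex hK)
  rw [ballFinal, dif_pos hex, add_comm, iterate_add_apply,
    iterate_fixed (stepD_of_absorbing (Nat.find_spec hex))]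

end SwitchGraph

theorem isAcyclicSG_of_rank {s0 s1 : V → V} (r : V → ℕ)
    (hr : ∀ v w, (w = s0 v ∨ w = s1 v) → w = v ∨ r v < r w) : IsAcyclicSG s0 s1 := by
  intro k v _ hcycle hedge
  have hstep (j : ℕ) (hj : j < k) : v (j + 1) = v j ∨ r (v j) < r (v (j + 1)) :=
    hr _ _ (hedge j hj)
  have hmono (i j : ℕ) (hij : i ≤ j) (hjk : j ≤ k) : r (v i) ≤ r (v j) := by
    induction hij with
    | refl => exact le_rfl
    | step _ ih =>
      refine (ih (by omega)).trans ?_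
      rcases hstep _ hjk with h | h
      · rw [h]
      · exact h.le
  have hconst (j : ℕ) (hj : j ≤ k) : r (v j) = r (v 0) :=
    le_antisymm (hcycle ▸ hmono j k hj le_rfl) (hmono 0 j (Nat.zero_le j) hj)
  intro j hj
  induction j with
  | zero => rfl
  | succ j ih =>
    rcases hstep j hj with h | h
    · rw [h, ih (by omega)]
    · have := hconst j (by omega)
      have := hconst (j + 1) hj
      omega

namespace BinaryCounter

/-- Vertices `0, …, m - 1` hold the bits of the counter, `m` is the exit `D` and `m + 1` the
exit `F`. A ball at bit `j` carries on to bit `j + 1` exactly when the switch there differs from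
bit `j` of the offset `B`; otherwise it drops to `F`. -/
def switch (m B : ℕ) (b : Bool) (v : Fin (m + 2)) : Fin (m + 2) :=
  if h : v.val < m then
    if b != B.testBit v then ⟨v + 1, by omega⟩ else Fin.last (m + 1)
  else v

def flipBelow {n : ℕ} (σ : Fin n → Bool) (l : ℕ) : Fin n → Bool :=
  fun w => if w.val < l then !σ w else σ w

/-- `σ` stores the number `N` modulo `2 ^ m`, each switch read relative to the offset `B`. -/
def Encodes (m B N : ℕ) (σ : Fin (m + 2) → Bool) : Prop :=
  ∀ j (hj : j < m), (σ ⟨j, by omega⟩ != B.testBit j) = N.testBit j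

variable {m B N : ℕ} {σ : Fin (m + 2) → Bool}

theorem isAcyclicSG : IsAcyclicSG (switch m B false) (switch m B true) := by
  refine isAcyclicSG_of_rank Fin.val fun v w hw => ?_
  have hsw (b : Bool) : switch m B b v = v ∨ v.val < (switch m B b v).val := by
    unfold switch
    split_ifs <;> simp [Fin.ext_iff]
    omega
  rcases hw with rfl | rfl <;> apply hsw

theorem absorbing_of_le {v : Fin (m + 2)} (hv : m ≤ v.val) :
    Absorbing (switch m B false) (switch m B true) v := by
  simp [Absorbing, switch, hv.not_gt]

theorem stepD_of_lt {l : ℕ} (hl : l < m) (τ : Fin (m + 2) → Bool) :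
    stepD (switch m B false) (switch m B true) (⟨l, by omega⟩, τ) =
      (if τ ⟨l, by omega⟩ != B.testBit l then ⟨l + 1, by omega⟩ else Fin.last (m + 1),
        update τ ⟨l, by omega⟩ (!τ ⟨l, by omega⟩)) := by
  have hnot : ¬Absorbing (switch m B false) (switch m B true) ⟨l, by omega⟩ := by
    rintro ⟨h, -⟩
    simp only [switch, hl] at h
    split_ifs at h <;> simp [Fin.ext_iff] at h <;> omega
  rw [stepD_of_not_absorbing hnot, step]
  cases hτ : τ ⟨l, by omega⟩ <;> simp [switch, hl, hτ]

theorem update_flipBelow {n l : ℕ} (σ : Fin n → Bool) (hl : l < n) :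
    update (flipBelow σ l) ⟨l, hl⟩ (!σ ⟨l, hl⟩) = flipBelow σ (l + 1) := by
  funext w
  rcases lt_trichotomy w.val l with h | h | h
  · simp [flipBelow, update, h, Fin.ext_iff, h.ne, h.trans (Nat.lt_succ_self l)]
  · have : w = ⟨l, hl⟩ := Fin.ext h
    subst this
    simp [flipBelow]
  · simp [flipBelow, update, Fin.ext_iff, h.ne', h.not_gt, show ¬ w.val < l + 1 by omega]

theorem iterate_stepD_of_testBit (hσ : Encodes m B N σ) {l : ℕ} (hl : l ≤ m)
    (hN : ∀ j < l, N.testBit j = true) :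
    (stepD (switch m B false) (switch m B true))^[l] (⟨0, by omega⟩, σ) =
      (⟨l, by omega⟩, flipBelow σ l) := by
  induction l with
  | zero => exact Prod.ext rfl (funext fun w => by simp [flipBelow])
  | succ l ih =>
    have hlm : l < m := by omega
    have hfl : flipBelow σ l ⟨l, by omega⟩ = σ ⟨l, by omega⟩ := by simp [flipBelow]
    rw [iterate_succ_apply', ih (by omega) fun j hj => hN j (by omega), stepD_of_lt hlm, hfl,
      hσ l hlm, hN l (Nat.lt_succ_self l), if_pos rfl, update_flipBelow]

theorem Encodes.flipBelow_add_one (hσ : Encodes m B N σ) {T L : ℕ}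
    (hlow : ∀ j < T, N.testBit j = true) (hT : N.testBit T = false)
    (hL : ∀ j < m, j < L ↔ j ≤ T) : Encodes m B (N + 1) (flipBelow σ L) := by
  intro j hj
  rw [Nat.testBit_add_one_of_lowest_zero hlow hT, ← hσ j hj]
  by_cases hjT : j ≤ T
  · simp [flipBelow, (hL j hj).2 hjT, hjT]
  · simp [flipBelow, mt (hL j hj).1 hjT, hjT]

theorem exists_iterate_stepD (hσ : Encodes m B N σ) :
    ∃ K σ', (stepD (switch m B false) (switch m B true))^[K] (⟨0, by omega⟩, σ) =
      (if ∀ j < m, N.testBit j = true then ⟨m, by omega⟩ else Fin.last (m + 1), σ') ∧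
      Encodes m B (N + 1) σ' := by
  have hzero : ∃ t, N.testBit t = false :=
    ⟨N, Nat.testBit_lt_two_pow Nat.lt_two_pow_self⟩
  set T := Nat.find hzero
  have hT : N.testBit T = false := Nat.find_spec hzero
  have hlow : ∀ j < T, N.testBit j = true := fun j hj => by simpa using Nat.find_min hzero hj
  by_cases hTm : T < m
  · have hnot : ¬∀ j < m, N.testBit j = true := fun h => by simp [h T hTm] at hT
    refine ⟨T + 1, flipBelow σ (T + 1), ?_,
      hσ.flipBelow_add_one hlow hT fun _ _ => Nat.lt_succ_iff⟩
    have hfl : flipBelow σ T ⟨T, by omega⟩ = σ ⟨T, by omega⟩ := by simp [flipBelow]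
    rw [iterate_succ_apply', iterate_stepD_of_testBit hσ hTm.le hlow, stepD_of_lt hTm, hfl,
      hσ T hTm, hT, if_neg hnot, update_flipBelow]
    rfl
  · have hall : ∀ j < m, N.testBit j = true := fun j hj => hlow j (by omega)
    exact ⟨m, flipBelow σ m, by rw [iterate_stepD_of_testBit hσ le_rfl hall, if_pos hall],
      hσ.flipBelow_add_one hlow hT fun j hj => by omega⟩

theorem sigmaAfter_encodes (i : ℕ) :
    Encodes m B (B + i) (sigmaAfter (switch m B false) (switch m B true) ⟨0, by omega⟩ i) := by
  induction i with
  | zero => intro j hj; simp [sigmaAfter]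
  | succ i ih =>
    obtain ⟨K, σ', hK, hσ'⟩ := exists_iterate_stepD ih
    rw [sigmaAfter, ballFinal_eq_of_absorbing (K := K) ?_, hK]
    · exact hσ'
    · rw [hK]
      exact absorbing_of_le (by split_ifs <;> simp)

theorem exists_ballConfig_eq (i : ℕ) :
    ∃ K, (ballConfig (switch m B false) (switch m B true) ⟨0, by omega⟩ i K).1 =
      if ∀ j < m, (B + i).testBit j = true then ⟨m, by omega⟩ else Fin.last (m + 1) :=
  let ⟨K, _, hK, _⟩ := exists_iterate_stepD (sigmaAfter_encodes (B := B) i)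
  ⟨K, congrArg Prod.fst hK⟩

end BinaryCounter

/-- Acyclic Digicomp counters: for every `k ≥ 1` there is an acyclic switch graph on at
most `⌊log₂ k⌋ + 3` vertices with an entry vertex `c` and distinct absorbing vertices
`F` and `D` such that, releasing balls sequentially from `c`, each of the first `k - 1`
balls stops at `F` and the `k`-th ball stops at `D`. -/
theorem acyclic_digicomp_counter (k : ℕ) (hk : 1 ≤ k) :
    ∃ n : ℕ, n ≤ Nat.log 2 k + 3 ∧
      ∃ (s0 s1 : Fin n → Fin n), IsAcyclicSG s0 s1 ∧
        ∃ (c F D : Fin n), F ≠ D ∧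
          Absorbing s0 s1 F ∧ Absorbing s0 s1 D ∧
          (∀ i, i < k - 1 → ∃ K, (ballConfig s0 s1 c i K).1 = F) ∧
          (∃ K, (ballConfig s0 s1 c (k - 1) K).1 = D) := by
  set m := Nat.log 2 k + 1
  have hkm : k < 2 ^ m := Nat.lt_pow_succ_log_self (by norm_num) k
  refine ⟨m + 2, by omega, BinaryCounter.switch m (2 ^ m - k) false,
    BinaryCounter.switch m (2 ^ m - k) true, BinaryCounter.isAcyclicSG, ⟨0, by omega⟩,
    Fin.last (m + 1), ⟨m, by omega⟩, by simp [Fin.ext_iff],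
    BinaryCounter.absorbing_of_le (by simp), BinaryCounter.absorbing_of_le le_rfl, fun i hi => ?_, ?_⟩
  · obtain ⟨K, hK⟩ := BinaryCounter.exists_ballConfig_eq (m := m) (B := 2 ^ m - k) i
    refine ⟨K, hK.trans (if_neg fun hall => ?_)⟩
    have : 2 ^ m - 1 ≤ 2 ^ m - k + i :=
      Nat.le_of_testBit fun j hj => hall j (by simpa using hj)
    omega
  · obtain ⟨K, hK⟩ := BinaryCounter.exists_ballConfig_eq (m := m) (B := 2 ^ m - k) (k - 1)
    refine ⟨K, hK.trans (if_pos fun j hj => ?_)⟩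
    rw [show 2 ^ m - k + (k - 1) = 2 ^ m - 1 by omega, Nat.testBit_two_pow_sub_one]
    exact decide_eq_true hj
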